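/- arXiv:2310.12355 — 2 statements merged into one kernel-verified Lean document; each statement's English description precedes it below -/
import Mathlib

section
/- There exists a constant C > 0 such that for all n ≥ 2 and all p ∈ [0,1], T(n,p)/(n−1) ≤ C. -/
open MeasureTheory Filter
open scoped Classical

namespace ERW

/-- Bernoulli measure on `Bool` with success probability `p`. -/
noncomputable def bern (p : ℝ) : Measure Bool :=
  (ENNReal.ofReal p) • Measure.dirac true + (ENNReal.ofReal (1 - p)) • Measure.dirac false

/-- The Erdős–Rényi measure: each potential edge (unordered pair of vertices) is present
independently with probability `p`. -/
noncomputable def erMeasure (n : ℕ) (p : ℝ) : Measure (Sym2 (Fin n) → Bool) :=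
  Measure.pi fun _ => bern p

/-- The graph determined by an edge configuration `ω` (diagonal coordinates are ignored). -/
def graphOf {n : ℕ} (ω : Sym2 (Fin n) → Bool) : SimpleGraph (Fin n) where
  Adj i j := i ≠ j ∧ ω s(i, j) = true
  symm := by
    constructor
    intro i j h
    exact ⟨h.1.symm, Sym2.eq_swap (a := j) ▸ h.2⟩
  loopless := by constructor; intro i h; exact h.1 rfl

/-- The degree `d(v)` of vertex `v`. -/
noncomputable def deg {n : ℕ} (ω : Sym2 (Fin n) → Bool) (v : Fin n) : ℕ :=
  Set.ncard {u | (graphOf ω).Adj v u}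

/-- The random variable `1_{d(v) ≥ 1} / d(v)`. -/
noncomputable def invDeg {n : ℕ} (ω : Sym2 (Fin n) → Bool) (v : Fin n) : ℝ :=
  if deg ω v = 0 then 0 else 1 / (deg ω v : ℝ)

/-- `|C(v)|`: the number of vertices in the connected component of `v`. -/
noncomputable def compSize {n : ℕ} (ω : Sym2 (Fin n) → Bool) (v : Fin n) : ℕ :=
  Set.ncard {u | (graphOf ω).Reachable v u}

/-- `|E(C(v))|`: the number of present edges with both endpoints in the component of `v`. -/
noncomputable def edgesInComp {n : ℕ} (ω : Sym2 (Fin n) → Bool) (v : Fin n) : ℕ :=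
  Set.ncard {e : Sym2 (Fin n) | e ∈ (graphOf ω).edgeSet ∧ ∀ u ∈ e, (graphOf ω).Reachable v u}

/-- `T(n,p) = E_{n,p}[ 2|E(C(1))| ⋅ 1_{d(1)≥1}/d(1) + 1_{d(1)=0} ]`, the expected first return
time to vertex `1` (here vertex `⟨0,_⟩`) of a simple random walk on `G(n,p)`. -/
noncomputable def T (n : ℕ) (p : ℝ) : ℝ :=
  if h : 0 < n then
    ∫ ω, (2 * (edgesInComp ω ⟨0, h⟩ : ℝ) * invDeg ω ⟨0, h⟩
      + (if deg ω ⟨0, h⟩ = 0 then 1 else 0)) ∂(erMeasure n p)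
  else 0

/-! ### Auxiliary machinery -/

/-- weight of a boolean under Bernoulli(p) -/
noncomputable def wt (p : ℝ) (b : Bool) : ℝ := if b then p else 1 - p

lemma wt_nonneg {p : ℝ} (h0 : 0 ≤ p) (h1 : p ≤ 1) (b : Bool) : 0 ≤ wt p b := by
  cases b <;> simp [wt] <;> linarith

lemma wt_sum (p : ℝ) : wt p true + wt p false = 1 := by simp [wt]

lemma bern_singleton {p : ℝ} (h0 : 0 ≤ p) (h1 : p ≤ 1) (b : Bool) :
    bern p {b} = ENNReal.ofReal (wt p b) := by
  have hd : ∀ a b : Bool, Measure.dirac a ({b} : Set Bool) = if a = b then 1 else 0 := by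
    intro a b
    rw [Measure.dirac_apply' _ (MeasurableSet.singleton b)]
    by_cases h : a = b <;> simp [h]
  cases b <;>
    simp [bern, Measure.coe_add, Pi.add_apply, Measure.smul_apply, hd, wt, smul_eq_mul]

lemma isProb_bern {p : ℝ} (h0 : 0 ≤ p) (h1 : p ≤ 1) : IsProbabilityMeasure (bern p) := by
  constructor
  have : (Set.univ : Set Bool) = {true} ∪ {false} := by
    ext b; cases b <;> simp
  rw [this, measure_union (by simp) (MeasurableSet.singleton false),
    bern_singleton h0 h1, bern_singleton h0 h1,
    ← ENNReal.ofReal_add (by simpa [wt] using h0) (by simp [wt]; linarith)]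
  simp [wt]

section PiSums

variable {ι : Type*} [Fintype ι] [DecidableEq ι]

/-- sum over boolean configurations of a product of per-coordinate weights -/
lemma sum_pi_prod (w : ι → Bool → ℝ) :
    ∑ x : ι → Bool, ∏ i, w i (x i) = ∏ i, (w i true + w i false) := by
  classical
  rw [show (∏ i, (w i true + w i false)) = ∏ i, ∑ b : Bool, w i b by
      simp [Fintype.sum_bool],
    Finset.prod_univ_sum]
  rw [Fintype.piFinset_univ]

lemma sum_wt_one (p : ℝ) : ∑ x : ι → Bool, ∏ i, wt p (x i) = 1 := by
  rw [sum_pi_prod]; simp [wt_sum]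

/-- expectation of a function of a single coordinate -/
lemma sum_wt_coord (p : ℝ) (i0 : ι) (c : Bool → ℝ) :
    ∑ x : ι → Bool, (∏ i, wt p (x i)) * c (x i0) =
      p * c true + (1 - p) * c false := by
  classical
  have hs := sum_pi_prod (ι := ι) (fun i b => if i = i0 then wt p b * c b else wt p b)
  have key : ∀ x : ι → Bool,
      (∏ i, wt p (x i)) * c (x i0)
        = ∏ i, (if i = i0 then wt p (x i) * c (x i) else wt p (x i)) := by
    intro x
    rw [← Finset.mul_prod_erase Finset.univ (fun i => wt p (x i)) (Finset.mem_univ i0),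
        ← Finset.mul_prod_erase Finset.univ
          (fun i => if i = i0 then wt p (x i) * c (x i) else wt p (x i))
          (Finset.mem_univ i0)]
    have h1 : ∀ i ∈ Finset.univ.erase i0,
        (if i = i0 then wt p (x i) * c (x i) else wt p (x i)) = wt p (x i) := by
      intro i hi
      simp [Finset.mem_erase.mp hi |>.1]
    rw [Finset.prod_congr rfl h1]
    simp; ring
  rw [Finset.sum_congr rfl (fun x _ => key x), hs,
    ← Finset.mul_prod_erase Finset.univ _ (Finset.mem_univ i0)]
  have h2 : ∀ i ∈ Finset.univ.erase i0,
      ((if i = i0 then wt p true * c true else wt p true)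
        + (if i = i0 then wt p false * c false else wt p false)) = 1 := by
    intro i hi
    simp [Finset.mem_erase.mp hi |>.1, wt_sum]
  rw [Finset.prod_congr rfl h2]
  simp [wt]

/-- the key binomial estimate: `(m+1) p · E[1/(1+Bin(m,p))] ≤ 1`. -/
lemma binom_core (p : ℝ) (h0 : 0 ≤ p) (h1 : p ≤ 1) :
    ((Fintype.card ι : ℝ) + 1) * p *
      ∑ x : ι → Bool, (∏ i, wt p (x i)) *
        (1 / ((Finset.univ.filter (fun i => x i = true)).card + 1 : ℝ)) ≤ 1 := by
  classical
  set m := Fintype.card ι with hm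
  set q : ℝ := 1 - p with hq
  have hq0 : 0 ≤ q := by simp [hq]; linarith
  let e : Finset ι ≃ (ι → Bool) :=
    { toFun := fun S i => decide (i ∈ S)
      invFun := fun x => Finset.univ.filter (fun i => x i = true)
      left_inv := by intro S; ext i; simp
      right_inv := by intro x; funext i; by_cases h : x i = true <;> simp [h] }
  rw [← Equiv.sum_comp e (fun x => (∏ i, wt p (x i)) *
        (1 / ((Finset.univ.filter (fun i => x i = true)).card + 1 : ℝ)))]
  have hW : ∀ S : Finset ι, (∏ i, wt p ((e S) i)) = p ^ S.card * q ^ (m - S.card) := by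
    intro S
    rw [← Finset.prod_sdiff (Finset.subset_univ S)]
    have h1 : ∀ i ∈ S, wt p ((e S) i) = p := by intro i hi; simp [e, wt, hi]
    have h2 : ∀ i ∈ Finset.univ \ S, wt p ((e S) i) = q := by
      intro i hi
      have : i ∉ S := (Finset.mem_sdiff.mp hi).2
      simp [e, wt, this, hq]
    rw [Finset.prod_congr rfl h1, Finset.prod_congr rfl h2, Finset.prod_const,
      Finset.prod_const, Finset.card_sdiff_of_subset (Finset.subset_univ S), Finset.card_univ]
    ring
  have hC : ∀ S : Finset ι,
      (Finset.univ.filter (fun i => (e S) i = true)).card = S.card := by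
    intro S; congr 1; ext i; simp [e]
  have hsum : ∀ S : Finset ι,
      (∏ i, wt p ((e S) i)) *
        (1 / ((Finset.univ.filter (fun i => (e S) i = true)).card + 1 : ℝ))
      = p ^ S.card * q ^ (m - S.card) * (1 / ((S.card : ℝ) + 1)) := by
    intro S; rw [hW, hC]
  rw [Finset.sum_congr rfl (fun S _ => hsum S)]
  have hps : (Finset.univ : Finset (Finset ι)) = Finset.univ.powerset :=
    Finset.powerset_univ.symm
  rw [hps, Finset.sum_powerset]
  have hinner : ∀ j ∈ Finset.range ((Finset.univ : Finset ι).card + 1),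
      ∑ S ∈ Finset.powersetCard j (Finset.univ : Finset ι),
        p ^ S.card * q ^ (m - S.card) * (1 / ((S.card : ℝ) + 1))
      = (m.choose j : ℝ) * (p ^ j * q ^ (m - j) * (1 / ((j : ℝ) + 1))) := by
    intro j _
    have : ∀ S ∈ Finset.powersetCard j (Finset.univ : Finset ι),
        p ^ S.card * q ^ (m - S.card) * (1 / ((S.card : ℝ) + 1))
        = p ^ j * q ^ (m - j) * (1 / ((j : ℝ) + 1)) := by
      intro S hS
      rw [(Finset.mem_powersetCard_univ.mp hS : S.card = j)]
    rw [Finset.sum_congr rfl this, Finset.sum_const, Finset.card_powersetCard,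
      Finset.card_univ, nsmul_eq_mul]
  rw [Finset.sum_congr rfl hinner, Finset.card_univ]
  rw [Finset.mul_sum]
  have hterm : ∀ j ∈ Finset.range (m + 1),
      ((m : ℝ) + 1) * p * ((m.choose j : ℝ) * (p ^ j * q ^ (m - j) * (1 / ((j : ℝ) + 1))))
      = p ^ (j + 1) * q ^ ((m + 1) - (j + 1)) * ((m + 1).choose (j + 1) : ℝ) := by
    intro j _
    have hc : ((m : ℝ) + 1) * (m.choose j : ℝ) = ((m + 1).choose (j + 1) : ℝ) * ((j : ℝ) + 1) := by
      have h := Nat.add_one_mul_choose_eq m j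
      have h2 : ((m.succ * m.choose j : ℕ) : ℝ) = (((m + 1).choose (j + 1) * (j + 1) : ℕ) : ℝ) := by
        exact_mod_cast congrArg (Nat.cast (R := ℝ)) h
      push_cast at h2
      linarith [h2]
    have hj : ((j : ℝ) + 1) ≠ 0 := by positivity
    have hms : (m + 1) - (j + 1) = m - j := Nat.succ_sub_succ m j
    rw [hms]
    field_simp
    linear_combination (p ^ (j+1) * q ^ (m-j)) * hc
  rw [Finset.sum_congr rfl hterm]
  have hbin : ∑ k ∈ Finset.range (m + 2), p ^ k * q ^ ((m + 1) - k) * (((m + 1).choose k : ℝ))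
      = 1 := by
    rw [← add_pow p q (m + 1)]
    simp [hq]
  have hsplit := Finset.sum_range_succ'
    (fun k => p ^ k * q ^ ((m + 1) - k) * (((m + 1).choose k : ℝ))) (m + 1)
  have h0term : (0:ℝ) ≤ p ^ 0 * q ^ ((m + 1) - 0) * (((m + 1).choose 0 : ℝ)) := by positivity
  have hfull : ∑ k ∈ Finset.range (m + 2), p ^ k * q ^ ((m + 1) - k) * (((m + 1).choose k : ℝ))
      = ∑ j ∈ Finset.range (m + 1), p ^ (j + 1) * q ^ ((m + 1) - (j + 1)) *
          (((m + 1).choose (j + 1) : ℝ)) + p ^ 0 * q ^ ((m + 1) - 0) * (((m + 1).choose 0 : ℝ)) :=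
    hsplit
  linarith [hbin, hfull, h0term]

end PiSums

/-! ### Graph counting lemmas -/

variable {n : ℕ}

lemma adj_iff (ω : Sym2 (Fin n) → Bool) (a b : Fin n) :
    (graphOf ω).Adj a b ↔ a ≠ b ∧ ω s(a, b) = true := Iff.rfl

lemma mem_edgeSet_iff (ω : Sym2 (Fin n) → Bool) (e : Sym2 (Fin n)) :
    e ∈ (graphOf ω).edgeSet ↔ ¬ e.IsDiag ∧ ω e = true := by
  induction e using Sym2.ind with
  | _ a b =>
    rw [SimpleGraph.mem_edgeSet, adj_iff, Sym2.mk_isDiag_iff]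

/-- number of present, nondiagonal edges avoiding `v` -/
noncomputable def Moff (ω : Sym2 (Fin n) → Bool) (v : Fin n) : ℕ :=
  (Finset.univ.filter (fun e : Sym2 (Fin n) => ¬ e.IsDiag ∧ v ∉ e ∧ ω e = true)).card

lemma ncard_incidence (ω : Sym2 (Fin n) → Bool) (v : Fin n) :
    {e : Sym2 (Fin n) | e ∈ (graphOf ω).edgeSet ∧ v ∈ e}.ncard = deg ω v := by
  have himg : {e : Sym2 (Fin n) | e ∈ (graphOf ω).edgeSet ∧ v ∈ e}
      = (fun u => s(v, u)) '' {u | (graphOf ω).Adj v u} := by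
    ext e
    constructor
    · rintro ⟨he, hv⟩
      refine ⟨Sym2.Mem.other hv, ?_, Sym2.other_spec hv⟩
      have := Sym2.other_spec hv
      rw [← this] at he
      exact ((graphOf ω).mem_edgeSet).mp he
    · rintro ⟨u, hu, rfl⟩
      exact ⟨((graphOf ω).mem_edgeSet).mpr hu, Sym2.mem_mk_left v u⟩
  rw [himg, Set.ncard_image_of_injOn (fun u _ u' _ h => Sym2.congr_right.mp h)]
  rfl

lemma edgesInComp_le (ω : Sym2 (Fin n) → Bool) (v : Fin n) :
    edgesInComp ω v ≤ deg ω v + Moff ω v := by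
  set F : Finset (Sym2 (Fin n)) :=
    Finset.univ.filter (fun e : Sym2 (Fin n) => ¬ e.IsDiag ∧ v ∉ e ∧ ω e = true) with hF
  set I : Set (Sym2 (Fin n)) := {e | e ∈ (graphOf ω).edgeSet ∧ v ∈ e} with hI
  have hsub : {e : Sym2 (Fin n) | e ∈ (graphOf ω).edgeSet ∧ ∀ u ∈ e, (graphOf ω).Reachable v u}
      ⊆ I ∪ (F : Set (Sym2 (Fin n))) := by
    rintro e ⟨he, -⟩
    by_cases hv : v ∈ e
    · exact Or.inl ⟨he, hv⟩
    · right
      have := (mem_edgeSet_iff ω e).mp he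
      simp only [hF, Finset.coe_filter, Finset.mem_univ, Set.mem_setOf_eq, true_and]
      exact ⟨this.1, hv, this.2⟩
  have h1 : edgesInComp ω v ≤ (I ∪ (F : Set (Sym2 (Fin n)))).ncard :=
    Set.ncard_le_ncard hsub (Set.toFinite _)
  have h2 : (I ∪ (F : Set (Sym2 (Fin n)))).ncard ≤ I.ncard + (F : Set (Sym2 (Fin n))).ncard :=
    Set.ncard_union_le _ _
  have h3 : I.ncard = deg ω v := ncard_incidence ω v
  have h4 : (F : Set (Sym2 (Fin n))).ncard = Moff ω v := Set.ncard_coe_finset F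
  omega

lemma deg_congr (ω ω' : Sym2 (Fin n) → Bool) (v : Fin n)
    (h : ∀ e : Sym2 (Fin n), v ∈ e → ¬ e.IsDiag → ω e = ω' e) : deg ω v = deg ω' v := by
  unfold deg
  congr 1
  ext u
  show (v ≠ u ∧ ω s(v, u) = true) ↔ (v ≠ u ∧ ω' s(v, u) = true)
  constructor <;> rintro ⟨hne, hω⟩ <;> refine ⟨hne, ?_⟩
  · rw [← h s(v,u) (Sym2.mem_mk_left v u) (by rw [Sym2.mk_isDiag_iff]; exact hne)]; exact hω
  · rw [h s(v,u) (Sym2.mem_mk_left v u) (by rw [Sym2.mk_isDiag_iff]; exact hne)]; exact hω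

lemma Moff_congr (ω ω' : Sym2 (Fin n) → Bool) (v : Fin n)
    (h : ∀ e : Sym2 (Fin n), v ∉ e → ω e = ω' e) : Moff ω v = Moff ω' v := by
  unfold Moff
  congr 1
  apply Finset.filter_congr
  intro e _
  constructor <;> rintro ⟨h1, h2, h3⟩ <;> exact ⟨h1, h2, by rw [h e h2] at *; exact h3⟩

lemma deg_count (v : Fin n) (x : {e : Sym2 (Fin n) // v ∈ e ∧ ¬ e.IsDiag} → Bool) :
    deg (fun e => if h : v ∈ e ∧ ¬ e.IsDiag then x ⟨e, h⟩ else false) v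
      = (Finset.univ.filter
          (fun i : {e : Sym2 (Fin n) // v ∈ e ∧ ¬ e.IsDiag} => x i = true)).card := by
  set ωx : Sym2 (Fin n) → Bool := fun e => if h : v ∈ e ∧ ¬ e.IsDiag then x ⟨e, h⟩ else false
    with hωx
  set T' : Set {e : Sym2 (Fin n) // v ∈ e ∧ ¬ e.IsDiag} := {i | x i = true} with hT
  have himg : {u | (graphOf ωx).Adj v u} = (fun i => Sym2.Mem.other i.2.1) '' T' := by
    ext u
    constructor
    · rintro ⟨hne, hω⟩
      have hq : v ∈ s(v, u) ∧ ¬ (s(v, u)).IsDiag :=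
        ⟨Sym2.mem_mk_left v u, by rw [Sym2.mk_isDiag_iff]; exact hne⟩
      refine ⟨⟨s(v, u), hq⟩, ?_, ?_⟩
      · have : ωx s(v, u) = x ⟨s(v, u), hq⟩ := by rw [hωx]; exact dif_pos hq
        rw [hT]; simpa [this] using hω
      · exact Sym2.congr_right.mp (Sym2.other_spec hq.1)
    · rintro ⟨i, hi, rfl⟩
      dsimp only
      have hsp := Sym2.other_spec i.2.1
      constructor
      · intro hv
        exact i.2.2 (by rw [← hsp, Sym2.mk_isDiag_iff]; exact hv)
      · have : s(v, Sym2.Mem.other i.2.1) = i.1 := hsp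
        rw [this]
        show ωx i.1 = true
        rw [hωx]
        simpa [dif_pos i.2, hT] using hi
  have hinj : Set.InjOn (fun i : {e : Sym2 (Fin n) // v ∈ e ∧ ¬ e.IsDiag} =>
      Sym2.Mem.other i.2.1) T' := by
    intro i _ j _ hij
    apply Subtype.ext
    rw [← Sym2.other_spec i.2.1, ← Sym2.other_spec j.2.1]
    simp only at hij
    rw [hij]
  rw [deg, himg, Set.ncard_image_of_injOn hinj, hT, Set.ncard_eq_toFinset_card',
    Set.toFinset_setOf]

lemma card_qsubtype (v : Fin n) :
    Fintype.card {e : Sym2 (Fin n) // v ∈ e ∧ ¬ e.IsDiag} = n - 1 := by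
  have φ : {u : Fin n // u ≠ v} ≃ {e : Sym2 (Fin n) // v ∈ e ∧ ¬ e.IsDiag} :=
    { toFun := fun u => ⟨s(v, u.1), Sym2.mem_mk_left _ _,
        by rw [Sym2.mk_isDiag_iff]; exact fun h => u.2 h.symm⟩
      invFun := fun i => ⟨Sym2.Mem.other i.2.1,
        fun h => i.2.2 (by rw [← Sym2.other_spec i.2.1, h, Sym2.mk_isDiag_iff])⟩
      left_inv := by
        intro u
        apply Subtype.ext
        exact Sym2.congr_right.mp (Sym2.other_spec _)
      right_inv := by
        intro i
        apply Subtype.ext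
        exact Sym2.other_spec i.2.1 }
  rw [← Fintype.card_congr φ]
  have h1 : Fintype.card {u : Fin n // u = v} = 1 := Fintype.card_subtype_eq v
  have h2 := Fintype.card_subtype_compl (fun u : Fin n => u = v)
  rw [h1] at h2
  simpa using h2

lemma card_sym2_le (n : ℕ) : Fintype.card (Sym2 (Fin n)) ≤ n * n := by
  rw [Sym2.card, Fintype.card_fin, Nat.choose_two_right]
  have h : (n + 1) * ((n + 1) - 1) ≤ 2 * (n * n) := by simp; nlinarith
  calc (n + 1) * ((n + 1) - 1) / 2 ≤ 2 * (n * n) / 2 := Nat.div_le_div_right h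
    _ = n * n := by omega

/-! ### From the integral to a finite sum -/

lemma integral_er (n : ℕ) {p : ℝ} (h0 : 0 ≤ p) (h1 : p ≤ 1) (f : (Sym2 (Fin n) → Bool) → ℝ) :
    ∫ ω, f ω ∂(erMeasure n p)
      = ∑ ω : Sym2 (Fin n) → Bool, (∏ e, wt p (ω e)) * f ω := by
  haveI := isProb_bern h0 h1
  haveI : IsProbabilityMeasure (erMeasure n p) := by
    unfold erMeasure; infer_instance
  rw [integral_fintype (Integrable.of_finite)]
  apply Finset.sum_congr rfl
  intro ω _
  have hω : (erMeasure n p) {ω} = ∏ e, bern p {ω e} := by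
    rw [← Set.univ_pi_singleton ω, erMeasure, Measure.pi_pi]
  rw [measureReal_def, hω, ENNReal.toReal_prod,
    Finset.prod_congr rfl (fun e _ => by
      rw [bern_singleton h0 h1, ENNReal.toReal_ofReal (wt_nonneg h0 h1 _)]),
    smul_eq_mul]

/-! ### The main estimate -/

set_option maxHeartbeats 2000000 in
theorem T_le (n : ℕ) (hn : 2 ≤ n) {p : ℝ} (h0 : 0 ≤ p) (h1 : p ≤ 1) :
    T n p ≤ 4 * (n : ℝ) + 3 := by
  have hn0 : 0 < n := by omega
  rw [T, dif_pos hn0, integral_er n h0 h1]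
  set v : Fin n := ⟨0, hn0⟩ with hv
  set q : Sym2 (Fin n) → Prop := fun e => v ∈ e ∧ ¬ e.IsDiag with hqdef
  have hWnn : ∀ ω : Sym2 (Fin n) → Bool, 0 ≤ ∏ e, wt p (ω e) :=
    fun ω => Finset.prod_nonneg fun e _ => wt_nonneg h0 h1 _
  have hinv0 : ∀ ω : Sym2 (Fin n) → Bool, 0 ≤ invDeg ω v := by
    intro ω
    unfold invDeg
    split_ifs
    · exact le_rfl
    · positivity
  -- pointwise bound
  have hpt : ∀ ω : Sym2 (Fin n) → Bool,
      (∏ e, wt p (ω e)) * (2 * (edgesInComp ω v : ℝ) * invDeg ω v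
        + (if deg ω v = 0 then 1 else 0))
      ≤ (∏ e, wt p (ω e)) * (3 + 2 * (Moff ω v : ℝ) * invDeg ω v) := by
    intro ω
    apply mul_le_mul_of_nonneg_left _ (hWnn ω)
    have hdi : (deg ω v : ℝ) * invDeg ω v ≤ 1 := by
      unfold invDeg
      split_ifs with h
      · simp
      · rw [mul_one_div, div_self (by exact_mod_cast h)]
    have hE : (edgesInComp ω v : ℝ) ≤ (deg ω v : ℝ) + (Moff ω v : ℝ) := by
      exact_mod_cast edgesInComp_le ω v
    have hind : (if deg ω v = 0 then (1:ℝ) else 0) ≤ 1 := by split_ifs <;> norm_num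
    nlinarith [mul_le_mul_of_nonneg_right hE (hinv0 ω), hinv0 ω]
  refine le_trans (Finset.sum_le_sum (fun ω _ => hpt ω)) ?_
  have hring : ∀ ω : Sym2 (Fin n) → Bool,
      (∏ e, wt p (ω e)) * (3 + 2 * (Moff ω v : ℝ) * invDeg ω v)
      = 3 * (∏ e, wt p (ω e))
        + 2 * ((∏ e, wt p (ω e)) * ((Moff ω v : ℝ) * invDeg ω v)) := fun ω => by ring
  rw [Finset.sum_congr rfl (fun ω _ => hring ω), Finset.sum_add_distrib,
    ← Finset.mul_sum, ← Finset.mul_sum, sum_wt_one (ι := Sym2 (Fin n)) p, mul_one]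
  -- factorization through the splitting of coordinates
  set SA : ℝ := ∑ x : {e : Sym2 (Fin n) // q e} → Bool,
    (∏ i, wt p (x i)) * invDeg (fun e => if h : q e then x ⟨e, h⟩ else false) v with hSA
  set SB : ℝ := ∑ y : {e : Sym2 (Fin n) // ¬ q e} → Bool,
    (∏ i, wt p (y i))
      * ((Moff (fun e => if h : ¬ q e then y ⟨e, h⟩ else false) v : ℝ)) with hSB
  have hfact : ∑ ω : Sym2 (Fin n) → Bool,
      (∏ e, wt p (ω e)) * ((Moff ω v : ℝ) * invDeg ω v) = SA * SB := by
    set E := Equiv.piEquivPiSubtypeProd q (fun _ : Sym2 (Fin n) => Bool) with hE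
    rw [← Equiv.sum_comp E.symm
      (fun ω => (∏ e, wt p (ω e)) * ((Moff ω v : ℝ) * invDeg ω v)), Fintype.sum_prod_type]
    have hterm : ∀ (x : {e : Sym2 (Fin n) // q e} → Bool)
        (y : {e : Sym2 (Fin n) // ¬ q e} → Bool),
        (∏ e, wt p ((E.symm (x, y)) e)) *
          ((Moff (E.symm (x, y)) v : ℝ) * invDeg (E.symm (x, y)) v)
        = ((∏ i, wt p (x i)) * invDeg (fun e => if h : q e then x ⟨e, h⟩ else false) v)
          * ((∏ i, wt p (y i))
            * ((Moff (fun e => if h : ¬ q e then y ⟨e, h⟩ else false) v : ℝ))) := by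
      intro x y
      have happ : ∀ e : Sym2 (Fin n),
          (E.symm (x, y)) e = if h : q e then x ⟨e, h⟩ else y ⟨e, h⟩ := fun e => by
        rw [hE]; exact Equiv.piEquivPiSubtypeProd_symm_apply q (fun _ => Bool) (x, y) e
      have hW : (∏ e, wt p ((E.symm (x, y)) e)) = (∏ i, wt p (x i)) * (∏ i, wt p (y i)) := by
        rw [← Fintype.prod_subtype_mul_prod_subtype q (fun e => wt p ((E.symm (x, y)) e))]
        congr 1
        · apply Finset.prod_congr rfl
          intro i _
          rw [happ i.1, dif_pos i.2]
        · apply Finset.prod_congr rfl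
          intro i _
          rw [happ i.1, dif_neg i.2]
      have hdeg : invDeg (E.symm (x, y)) v
          = invDeg (fun e => if h : q e then x ⟨e, h⟩ else false) v := by
        unfold invDeg
        rw [deg_congr (E.symm (x, y)) (fun e => if h : q e then x ⟨e, h⟩ else false) v]
        intro e he hd
        have hqe : q e := ⟨he, hd⟩
        rw [happ e, dif_pos hqe, dif_pos hqe]
      have hM : Moff (E.symm (x, y)) v
          = Moff (fun e => if h : ¬ q e then y ⟨e, h⟩ else false) v := by
        apply Moff_congr
        intro e he
        have hqe : ¬ q e := fun hq => he hq.1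
        rw [happ e, dif_neg hqe, dif_pos hqe]
      rw [hW, hdeg, hM]
      ring
    rw [Finset.sum_congr rfl (fun x _ => Finset.sum_congr rfl (fun y _ => hterm x y))]
    rw [← Finset.sum_mul_sum]
  rw [hfact]
  -- bound SB
  have hSB_le : SB ≤ (Fintype.card (Sym2 (Fin n)) : ℝ) * p := by
    rw [hSB]
    have hMB : ∀ y : {e : Sym2 (Fin n) // ¬ q e} → Bool,
        ((Moff (fun e => if h : ¬ q e then y ⟨e, h⟩ else false) v : ℝ))
        = ∑ e : Sym2 (Fin n),
            (if (¬ e.IsDiag ∧ v ∉ e ∧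
              (if h : ¬ q e then y ⟨e, h⟩ else false) = true) then (1:ℝ) else 0) := by
      intro y
      rw [Moff, Finset.card_filter]
      push_cast
      apply Finset.sum_congr rfl
      intro e _
      split_ifs <;> norm_num
    have : ∑ y : {e : Sym2 (Fin n) // ¬ q e} → Bool,
        (∏ i, wt p (y i))
          * ((Moff (fun e => if h : ¬ q e then y ⟨e, h⟩ else false) v : ℝ))
        = ∑ e : Sym2 (Fin n), ∑ y : {e : Sym2 (Fin n) // ¬ q e} → Bool,
            (∏ i, wt p (y i)) *
            (if (¬ e.IsDiag ∧ v ∉ e ∧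
              (if h : ¬ q e then y ⟨e, h⟩ else false) = true) then (1:ℝ) else 0) := by
      rw [Finset.sum_congr rfl (fun y _ => by rw [hMB y, Finset.mul_sum])]
      rw [Finset.sum_comm]
    rw [this]
    have hcard : ((Fintype.card (Sym2 (Fin n)) : ℝ) * p) = ∑ _e : Sym2 (Fin n), p := by
      rw [Finset.sum_const, Finset.card_univ, nsmul_eq_mul]
    rw [hcard]
    apply Finset.sum_le_sum
    intro e _
    by_cases hcase : ¬ e.IsDiag ∧ v ∉ e
    · have hqe : ¬ q e := fun hq => hcase.2 hq.1
      have heq : ∀ y : {e : Sym2 (Fin n) // ¬ q e} → Bool,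
          (if (¬ e.IsDiag ∧ v ∉ e ∧
            (if h : ¬ q e then y ⟨e, h⟩ else false) = true) then (1:ℝ) else 0)
          = (fun b : Bool => if b = true then (1:ℝ) else 0) (y ⟨e, hqe⟩) := by
        intro y
        rw [dif_pos hqe]
        by_cases hb : y ⟨e, hqe⟩ = true
        · simp [hb, hcase.1, hcase.2]
        · simp [hb]
      rw [Finset.sum_congr rfl (fun y _ => by rw [heq y]),
        sum_wt_coord p (⟨e, hqe⟩ : {e : Sym2 (Fin n) // ¬ q e})
          (fun b : Bool => if b = true then (1:ℝ) else 0)]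
      simp
    · have heq : ∀ y : {e : Sym2 (Fin n) // ¬ q e} → Bool,
          (∏ i, wt p (y i)) *
          (if (¬ e.IsDiag ∧ v ∉ e ∧
            (if h : ¬ q e then y ⟨e, h⟩ else false) = true) then (1:ℝ) else 0) = 0 := by
        intro y
        have : ¬ (¬ e.IsDiag ∧ v ∉ e ∧
            (if h : ¬ q e then y ⟨e, h⟩ else false) = true) := by
          intro ⟨a, b, c⟩; exact hcase ⟨a, b⟩
        rw [if_neg this, mul_zero]
      rw [Finset.sum_congr rfl (fun y _ => heq y)]
      simp [h0]
  -- bound SA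
  have hSA_nn : 0 ≤ SA := by
    rw [hSA]
    apply Finset.sum_nonneg
    intro x _
    exact mul_nonneg (Finset.prod_nonneg fun i _ => wt_nonneg h0 h1 _) (hinv0 _)
  have hSA_le : (n : ℝ) * p * SA ≤ 2 := by
    have hcard : ((Fintype.card {e : Sym2 (Fin n) // q e} : ℝ) + 1) = (n : ℝ) := by
      have hc2 : Fintype.card {e : Sym2 (Fin n) // q e} = n - 1 := by
        have hcg := Fintype.card_congr
          (Equiv.subtypeEquivRight
            (p := q) (q := fun e : Sym2 (Fin n) => v ∈ e ∧ ¬ e.IsDiag) (fun e => Iff.rfl))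
        exact hcg.trans (card_qsubtype v)
      rw [hc2, Nat.cast_sub (by omega : 1 ≤ n)]
      norm_num
    have hbc := binom_core (ι := {e : Sym2 (Fin n) // q e}) p h0 h1
    rw [hcard] at hbc
    -- SA ≤ 2 * (the binomial sum)
    have hptw : ∀ x : {e : Sym2 (Fin n) // q e} → Bool,
        (∏ i, wt p (x i)) * invDeg (fun e => if h : q e then x ⟨e, h⟩ else false) v
        ≤ (∏ i, wt p (x i)) *
          (2 * (1 / ((Finset.univ.filter (fun i => x i = true)).card + 1 : ℝ))) := by
      intro x
      apply mul_le_mul_of_nonneg_left _ (Finset.prod_nonneg fun i _ => wt_nonneg h0 h1 _)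
      unfold invDeg
      rw [show deg (fun e => if h : q e then x ⟨e, h⟩ else false) v
          = (Finset.univ.filter (fun i : {e : Sym2 (Fin n) // q e} => x i = true)).card from
          deg_count v x]
      set c := (Finset.univ.filter (fun i : {e : Sym2 (Fin n) // q e} => x i = true)).card with hc
      split_ifs with h
      · positivity
      · have hc1 : (1:ℝ) ≤ (c:ℝ) := by exact_mod_cast Nat.one_le_iff_ne_zero.mpr h
        rw [mul_one_div, div_le_div_iff₀ (by linarith) (by linarith)]
        linarith
    have hSA2 : SA ≤ 2 * ∑ x : {e : Sym2 (Fin n) // q e} → Bool,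
        (∏ i, wt p (x i)) *
          (1 / ((Finset.univ.filter (fun i => x i = true)).card + 1 : ℝ)) := by
      rw [hSA, Finset.mul_sum]
      refine le_trans (Finset.sum_le_sum fun x _ => hptw x) ?_
      apply le_of_eq
      apply Finset.sum_congr rfl
      intro x _
      ring
    have hnp : 0 ≤ (n : ℝ) * p := by positivity
    calc (n : ℝ) * p * SA ≤ (n : ℝ) * p * (2 * ∑ x : {e : Sym2 (Fin n) // q e} → Bool,
        (∏ i, wt p (x i)) *
          (1 / ((Finset.univ.filter (fun i => x i = true)).card + 1 : ℝ))) :=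
        mul_le_mul_of_nonneg_left hSA2 hnp
      _ = 2 * ((n : ℝ) * p * ∑ x : {e : Sym2 (Fin n) // q e} → Bool,
        (∏ i, wt p (x i)) *
          (1 / ((Finset.univ.filter (fun i => x i = true)).card + 1 : ℝ))) := by ring
      _ ≤ 2 * 1 := by linarith [hbc]
      _ = 2 := by norm_num
  -- final arithmetic
  have hN : (Fintype.card (Sym2 (Fin n)) : ℝ) ≤ (n : ℝ) * n := by
    exact_mod_cast card_sym2_le n
  have hp0 : 0 ≤ p := h0
  have hSASB : SA * SB ≤ 2 * (n : ℝ) := by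
    have h1' : SA * SB ≤ SA * ((Fintype.card (Sym2 (Fin n)) : ℝ) * p) :=
      mul_le_mul_of_nonneg_left hSB_le hSA_nn
    have h2' : SA * ((Fintype.card (Sym2 (Fin n)) : ℝ) * p) ≤ SA * ((n:ℝ) * n * p) := by
      apply mul_le_mul_of_nonneg_left _ hSA_nn
      apply mul_le_mul_of_nonneg_right hN hp0
    have h3' : SA * ((n:ℝ) * n * p) = (n : ℝ) * ((n : ℝ) * p * SA) := by ring
    have h4' : (n : ℝ) * ((n : ℝ) * p * SA) ≤ (n : ℝ) * 2 := by
      apply mul_le_mul_of_nonneg_left hSA_le (by positivity)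
    linarith
  linarith

/-- `T(n,p)/(n-1)` is bounded uniformly in `n ≥ 2` and `p ∈ [0,1]`. -/
theorem stmt_9 : ∃ C : ℝ, 0 < C ∧ ∀ n : ℕ, 2 ≤ n → ∀ p ∈ Set.Icc (0 : ℝ) 1,
    T n p / ((n : ℝ) - 1) ≤ C := by
  refine ⟨100, by norm_num, ?_⟩
  intro n hn p hp
  obtain ⟨h0, h1⟩ := hp
  have hT := T_le n hn h0 h1
  have hn' : (2 : ℝ) ≤ (n : ℝ) := by exact_mod_cast hn
  have hden : (0 : ℝ) < (n : ℝ) - 1 := by linarith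
  rw [div_le_iff₀ hden]
  nlinarith

end ERW
end

section
/- Fix λ ∈ (0,1) and an integer k ≥ 1. Then for every n ≥ 2, E_{n,λ/n}[ |C(1)|^k ] ≤ ∑_{m=0}^∞ (m+1)^k e^{−m I_λ}, where I_λ := λ − 1 − log λ > 0, and this series is finite; in particular sup_{n≥2} E_{n,λ/n}[ |C(1)|^k ] < ∞. -/
set_option maxHeartbeats 1000000


open MeasureTheory Filter
open scoped Classical

namespace ERW

/-! ### Finite probability layer -/

section Core

set_option linter.unusedSectionVars false

variable {ι : Type*} [Fintype ι] [DecidableEq ι]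

/-- weight of a configuration -/
noncomputable def wtg (p : ℝ) (f : ι → Bool) : ℝ :=
  ∏ i : ι, (if f i then p else 1 - p)

lemma sum_prod_bool (h : ι → Bool → ℝ) :
    ∑ f : ι → Bool, ∏ i, h i (f i) = ∏ i, (h i true + h i false) := by
  rw [show (∏ i, (h i true + h i false)) = ∏ i, ∑ b : Bool, h i b by
    refine Finset.prod_congr rfl fun i _ => ?_
    simp [Fintype.sum_bool]]
  rw [Fintype.prod_sum fun i b => h i b]


lemma wtg_nonneg {p : ℝ} (hp0 : 0 ≤ p) (hp1 : p ≤ 1) (f : ι → Bool) : 0 ≤ wtg p f :=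
  Finset.prod_nonneg fun i _ => by
    by_cases h : f i <;> simp [wtg, h, hp0, hp1, sub_nonneg]

lemma sum_wtg (p : ℝ) : ∑ f : ι → Bool, wtg p f = 1 := by
  unfold wtg
  rw [sum_prod_bool fun i b => if b then p else 1 - p]
  simp

/-- probability of an event -/
noncomputable def Pr (p : ℝ) (P : (ι → Bool) → Prop) : ℝ :=
  ∑ f : ι → Bool, if P f then wtg p f else 0

lemma Pr_nonneg {p : ℝ} (hp0 : 0 ≤ p) (hp1 : p ≤ 1) (P : (ι → Bool) → Prop) :
    0 ≤ Pr p P := by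
  refine Finset.sum_nonneg fun f _ => ?_
  by_cases h : P f <;> simp [h, wtg_nonneg hp0 hp1]

lemma Pr_mono {p : ℝ} (hp0 : 0 ≤ p) (hp1 : p ≤ 1) {P Q : (ι → Bool) → Prop}
    (h : ∀ f, P f → Q f) : Pr p P ≤ Pr p Q := by
  refine Finset.sum_le_sum fun f _ => ?_
  by_cases hP : P f
  · simp [hP, h f hP]
  · by_cases hQ : Q f <;> simp [hP, hQ, wtg_nonneg hp0 hp1]

lemma Pr_le_one {p : ℝ} (hp0 : 0 ≤ p) (hp1 : p ≤ 1) (P : (ι → Bool) → Prop) :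
    Pr p P ≤ 1 := by
  calc Pr p P ≤ Pr p (fun _ => True) := Pr_mono hp0 hp1 fun f _ => trivial
  _ = 1 := by simp [Pr, sum_wtg]

lemma Pr_false {p : ℝ} {ι : Type*} [Fintype ι] : Pr p (fun _ : ι → Bool => False) = 0 := by
  unfold Pr
  exact Finset.sum_eq_zero fun f _ => by simp

/-- fiber decomposition -/
lemma Pr_fiber_sum {p : ℝ} {σ : Type*} (g : (ι → Bool) → σ) (s : Finset σ)
    (hg : ∀ f, g f ∈ s) (P : (ι → Bool) → Prop) :
    Pr p P = ∑ c ∈ s, Pr p (fun f => P f ∧ g f = c) := by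
  unfold Pr
  rw [Finset.sum_comm]
  refine Finset.sum_congr rfl fun f _ => ?_
  by_cases hP : P f
  · simp only [hP, true_and, if_true]
    rw [Finset.sum_ite_eq s (g f) (fun _ => wtg p f)] 
    simp [hg f]
  · simp [hP]

/-- fiber resummation with a weight -/
lemma Pr_fiber_weight {p : ℝ} {σ : Type*} (g : (ι → Bool) → σ) (s : Finset σ)
    (hg : ∀ f, g f ∈ s) (F : σ → ℝ) :
    ∑ c ∈ s, Pr p (fun f => g f = c) * F c = ∑ f : ι → Bool, wtg p f * F (g f) := by
  unfold Pr
  have : ∀ c ∈ s, (∑ f : ι → Bool, if g f = c then wtg p f else 0) * F c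
      = ∑ f : ι → Bool, if g f = c then wtg p f * F (g f) else 0 := by
    intro c _
    rw [Finset.sum_mul]
    refine Finset.sum_congr rfl fun f _ => ?_
    by_cases h : g f = c <;> simp [h]
  rw [Finset.sum_congr rfl this, Finset.sum_comm]
  refine Finset.sum_congr rfl fun f _ => ?_
  rw [Finset.sum_ite_eq s (g f) (fun _ => wtg p f * F (g f))]
  simp [hg f]

/-- Independence of events depending on disjoint coordinate sets. -/
lemma Pr_indep {p : ℝ} (J : ι → Prop) (P Q : (ι → Bool) → Prop)
    (hP : ∀ f g : ι → Bool, (∀ i, J i → f i = g i) → (P f ↔ P g))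
    (hQ : ∀ f g : ι → Bool, (∀ i, ¬ J i → f i = g i) → (Q f ↔ Q g)) :
    Pr p (fun f => P f ∧ Q f) = Pr p P * Pr p Q := by
  set e := Equiv.piEquivPiSubtypeProd J (fun _ : ι => Bool) with he
  have hwt : ∀ y : ({ i // J i } → Bool) × ({ i // ¬ J i } → Bool),
      wtg p (e.symm y) = wtg p y.1 * wtg p y.2 := by
    intro y
    rw [wtg, ← Fintype.prod_subtype_mul_prod_subtype J
      (fun i => if (e.symm y) i then p else 1 - p)]
    congr 1
    · refine Finset.prod_congr rfl fun i _ => ?_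
      have : (e.symm y) i.1 = y.1 i := by
        simp [he, Equiv.piEquivPiSubtypeProd, i.2]
      rw [this]
    · refine Finset.prod_congr rfl fun i _ => ?_
      have : (e.symm y) i.1 = y.2 i := by
        simp [he, Equiv.piEquivPiSubtypeProd, i.2]
      rw [this]
  have key : ∀ R : (ι → Bool) → Prop, Pr p R =
      ∑ u : { i // J i } → Bool, ∑ v : { i // ¬ J i } → Bool,
        (if R (e.symm (u, v)) then wtg p u * wtg p v else 0) := by
    intro R
    rw [Pr, ← Equiv.sum_comp e.symm (fun f => if R f then wtg p f else 0),
      Fintype.sum_prod_type]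
    refine Finset.sum_congr rfl fun u _ => Finset.sum_congr rfl fun v _ => ?_
    rw [hwt (u, v)]
  set P' : ({ i // J i } → Bool) → Prop := fun u => P (e.symm (u, fun _ => false)) with hP'
  set Q' : ({ i // ¬ J i } → Bool) → Prop := fun v => Q (e.symm (fun _ => false, v)) with hQ'
  have hPP : ∀ u v, P (e.symm (u, v)) ↔ P' u := by
    intro u v
    refine hP _ _ fun i hi => ?_
    simp [he, Equiv.piEquivPiSubtypeProd, hi]
  have hQQ : ∀ u v, Q (e.symm (u, v)) ↔ Q' v := by
    intro u v
    refine hQ _ _ fun i hi => ?_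
    simp [he, Equiv.piEquivPiSubtypeProd, hi]
  have e1 : Pr p (fun f => P f ∧ Q f)
      = (∑ u, if P' u then wtg p u else 0) * (∑ v, if Q' v then wtg p v else 0) := by
    rw [key, Finset.sum_mul_sum]
    refine Finset.sum_congr rfl fun u _ => Finset.sum_congr rfl fun v _ => ?_
    by_cases h1 : P' u <;> by_cases h2 : Q' v <;>
      simp [h1, h2, hPP u v, hQQ u v]
  have e2 : Pr p P = (∑ u, if P' u then wtg p u else 0) := by
    rw [key]
    have : ∀ u, ∑ v : { i // ¬ J i } → Bool, (if P (e.symm (u, v)) then wtg p u * wtg p v else 0)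
        = (if P' u then wtg p u else 0) * ∑ v : { i // ¬ J i } → Bool, wtg p v := by
      intro u
      rw [Finset.mul_sum]
      refine Finset.sum_congr rfl fun v _ => ?_
      by_cases h1 : P' u <;> simp [h1, hPP u v]
    rw [Finset.sum_congr rfl fun u _ => this u]
    simp [sum_wtg]
  have e3 : Pr p Q = (∑ v, if Q' v then wtg p v else 0) := by
    rw [key]
    have : ∀ u : { i // J i } → Bool,
        ∑ v : { i // ¬ J i } → Bool, (if Q (e.symm (u, v)) then wtg p u * wtg p v else 0)
        = wtg p u * ∑ v : { i // ¬ J i } → Bool, (if Q' v then wtg p v else 0) := by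
      intro u
      rw [Finset.mul_sum]
      refine Finset.sum_congr rfl fun v _ => ?_
      by_cases h2 : Q' v <;> simp [h2, hQQ u v]
    rw [Finset.sum_congr rfl fun u _ => this u, ← Finset.sum_mul]
    simp [sum_wtg]
  rw [e1, e2, e3]

/-- MGF-type computation: expectation of `z ^ (number of present coordinates among an
injectively indexed family)`. -/
lemma sum_wtg_pow {p z : ℝ} (hp0 : 0 ≤ p) (hp1 : p ≤ 1) (hz : 0 ≤ z)
    {κ : Type*} [DecidableEq κ] (U : Finset κ) (emb : κ → ι) (hemb : Set.InjOn emb U) :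
    ∑ f : ι → Bool, wtg p f * z ^ (U.filter (fun v => f (emb v) = true)).card
      = (1 - p + p * z) ^ U.card := by
  set E : Finset ι := U.image emb with hE
  have hcard : E.card = U.card := Finset.card_image_of_injOn hemb
  have step1 : ∀ f : ι → Bool,
      wtg p f * z ^ (U.filter (fun v => f (emb v) = true)).card
        = ∏ i : ι, ((if f i then p else 1 - p) * (if i ∈ E then (if f i then z else 1) else 1)) := by
    intro f
    rw [Finset.prod_mul_distrib]
    congr 1
    have h2 : z ^ (U.filter (fun v => f (emb v) = true)).card
        = ∏ v ∈ U, (if f (emb v) then z else 1) := by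
      rw [Finset.prod_ite, Finset.prod_const, Finset.prod_const, one_pow, mul_one]
    have h3 : (∏ v ∈ U, (if f (emb v) then z else 1)) = ∏ i ∈ E, (if f i then z else 1) := by
      rw [hE, Finset.prod_image (fun x hx y hy h => hemb hx hy h)]
    rw [h2, h3, show E = Finset.univ ∩ E from (Finset.univ_inter E).symm,
      ← Finset.prod_ite_mem]
    simp
  rw [Finset.sum_congr rfl fun f _ => step1 f,
    sum_prod_bool (fun i b => (if b then p else 1 - p) * (if i ∈ E then (if b then z else 1) else 1))]
  have : ∀ i : ι, ((if (true : Bool) then p else 1 - p) * (if i ∈ E then (if (true : Bool) then z else 1) else 1)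
      + (if (false : Bool) then p else 1 - p) * (if i ∈ E then (if (false : Bool) then z else 1) else 1))
      = (if i ∈ E then 1 - p + p * z else 1) := by
    intro i
    by_cases h : i ∈ E <;> simp [h] <;> ring
  rw [Finset.prod_congr rfl fun i _ => this i, Finset.prod_ite, Finset.prod_const,
    Finset.prod_const, one_pow, mul_one, Finset.filter_univ_mem, hcard]

end Core

/-! ### Graph layer -/

section Graph

variable {n : ℕ}

/-- The graph `graphOf ω` restricted to the vertex set `W`. -/
def Gr (ω : Sym2 (Fin n) → Bool) (W : Finset (Fin n)) : SimpleGraph (Fin n) where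
  Adj x y := x ∈ W ∧ y ∈ W ∧ (graphOf ω).Adj x y
  symm := ⟨fun x y ⟨hx, hy, h⟩ => ⟨hy, hx, h.symm⟩⟩
  loopless := ⟨fun x ⟨_, _, h⟩ => (graphOf ω).loopless.irrefl x h⟩

/-- Vertices outside `A` reachable from `A` inside the vertex set `W`. -/
noncomputable def Rset (ω : Sym2 (Fin n) → Bool) (W A : Finset (Fin n)) : Finset (Fin n) :=
  W.filter (fun v => v ∉ A ∧ ∃ a ∈ A, (Gr ω W).Reachable a v)

/-- Neighbours of `a` outside `A`, within `W`. -/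
noncomputable def Nset (ω : Sym2 (Fin n) → Bool) (W A : Finset (Fin n)) (a : Fin n) :
    Finset (Fin n) :=
  (W \ A).filter (fun v => ω s(a, v) = true)

lemma Rset_empty (ω : Sym2 (Fin n) → Bool) (W : Finset (Fin n)) : Rset ω W ∅ = ∅ := by
  unfold Rset
  refine Finset.filter_false_of_mem fun v _ => ?_
  rintro ⟨-, a, ha, -⟩
  exact absurd ha (Finset.notMem_empty a)

lemma Nset_subset (ω : Sym2 (Fin n) → Bool) (W A : Finset (Fin n)) (a : Fin n) :
    Nset ω W A a ⊆ W \ A := Finset.filter_subset _ _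

/-- Key decomposition: everything reachable from `A` in `W` either is a fresh neighbour of `a`
or is reachable in `W.erase a` from `(A.erase a) ∪ Nset`. -/
lemma Rset_subset_step (ω : Sym2 (Fin n) → Bool) (W A : Finset (Fin n)) (a : Fin n)
    (hAW : A ⊆ W) (ha : a ∈ A) :
    Rset ω W A ⊆ Nset ω W A a ∪ Rset ω (W.erase a) ((A.erase a) ∪ Nset ω W A a) := by
  set S := Nset ω W A a with hS
  set W' := W.erase a with hW'
  set B := (A.erase a) ∪ S with hB
  set RR := (A ∪ S) ∪ Rset ω W' B with hRR
  have hSA : ∀ v ∈ S, v ∉ A := fun v hv =>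
    (Finset.mem_sdiff.mp (Nset_subset ω W A a hv)).2
  have hSW' : ∀ v ∈ S, v ∈ W' := by
    intro v hv
    have h1 := Finset.mem_sdiff.mp (Nset_subset ω W A a hv)
    exact Finset.mem_erase.mpr ⟨fun h => hSA v hv (h ▸ ha), h1.1⟩
  have hBW' : B ⊆ W' := by
    intro v hv
    rcases Finset.mem_union.mp hv with h | h
    · exact Finset.mem_erase.mpr ⟨(Finset.mem_erase.mp h).1, hAW (Finset.mem_erase.mp h).2⟩
    · exact hSW' v h
  -- single step closure
  have step : ∀ x y : Fin n, x ∈ RR → (Gr ω W).Adj x y → y ∈ RR := by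
    intro x y hx ⟨hxW, hyW, hadj⟩
    by_cases hyA : y ∈ A
    · exact Finset.mem_union.mpr (Or.inl (Finset.mem_union.mpr (Or.inl hyA)))
    have hyW' : y ∈ W' := Finset.mem_erase.mpr ⟨fun h => hyA (h ▸ ha), hyW⟩
    -- helper: if some b ∈ B reaches x' and x' adjacent y within W', conclude
    have concl : ∀ b, b ∈ B → (Gr ω W').Reachable b y → y ∈ RR := by
      intro b hb hr
      by_cases hyS : y ∈ S
      · exact Finset.mem_union.mpr (Or.inl (Finset.mem_union.mpr (Or.inr hyS)))
      have hyB : y ∉ B := by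
        rw [hB]
        simp only [Finset.mem_union, Finset.mem_erase]
        rintro (⟨-, h⟩ | h)
        exacts [hyA h, hyS h]
      exact Finset.mem_union.mpr (Or.inr (Finset.mem_filter.mpr ⟨hyW', hyB, b, hb, hr⟩))
    rcases Finset.mem_union.mp hx with hx' | hxR
    · rcases Finset.mem_union.mp hx' with hxA | hxS
      · by_cases hxa : x = a
        · -- y is a fresh neighbour of a
          refine Finset.mem_union.mpr (Or.inl (Finset.mem_union.mpr (Or.inr ?_)))
          rw [hS]
          unfold Nset
          refine Finset.mem_filter.mpr ⟨Finset.mem_sdiff.mpr ⟨hyW, hyA⟩, ?_⟩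
          rw [← hxa]
          exact hadj.2
        · have hxB : x ∈ B := Finset.mem_union.mpr (Or.inl (Finset.mem_erase.mpr ⟨hxa, hxA⟩))
          have hxW' : x ∈ W' := Finset.mem_erase.mpr ⟨hxa, hxW⟩
          exact concl x hxB (SimpleGraph.Adj.reachable ⟨hxW', hyW', hadj⟩)
      · have hxB : x ∈ B := Finset.mem_union.mpr (Or.inr hxS)
        exact concl x hxB (SimpleGraph.Adj.reachable ⟨hSW' x hxS, hyW', hadj⟩)
    · have hx' := Finset.mem_filter.mp hxR
      obtain ⟨hxnB, b, hb, hr⟩ := hx'.2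
      have hxW'' : x ∈ W' := hx'.1
      exact concl b hb (hr.trans (SimpleGraph.Adj.reachable ⟨hxW'', hyW', hadj⟩))
  -- walk closure
  have walkcl : ∀ x y : Fin n, (Gr ω W).Walk x y → x ∈ RR → y ∈ RR := by
    intro x y w
    induction w with
    | nil => exact id
    | cons h q ih => exact fun hx => ih (step _ _ hx h)
  intro v hv
  obtain ⟨hvW, hvA, b, hb, hr⟩ := Finset.mem_filter.mp hv
  have hbRR : b ∈ RR := Finset.mem_union.mpr (Or.inl (Finset.mem_union.mpr (Or.inl hb)))
  have hvRR : v ∈ RR := hr.elim fun w => walkcl _ _ w hbRR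
  rcases Finset.mem_union.mp hvRR with h | h
  · rcases Finset.mem_union.mp h with h' | h'
    · exact absurd h' hvA
    · exact Finset.mem_union.mpr (Or.inl h')
  · exact Finset.mem_union.mpr (Or.inr h)

lemma Rset_card_step (ω : Sym2 (Fin n) → Bool) (W A : Finset (Fin n)) (a : Fin n)
    (hAW : A ⊆ W) (ha : a ∈ A) :
    (Rset ω W A).card ≤ (Nset ω W A a).card
      + (Rset ω (W.erase a) ((A.erase a) ∪ Nset ω W A a)).card :=
  le_trans (Finset.card_le_card (Rset_subset_step ω W A a hAW ha)) (Finset.card_union_le _ _)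

lemma Gr_congr {ω ω' : Sym2 (Fin n) → Bool} {a : Fin n} {W₁ : Finset (Fin n)}
    (hω : ∀ e, a ∉ e → ω e = ω' e) (haW : a ∉ W₁) : Gr ω W₁ = Gr ω' W₁ := by
  ext x y
  constructor <;> rintro ⟨hx, hy, hne, he⟩ <;> refine ⟨hx, hy, hne, ?_⟩
  · rw [← hω s(x, y) (by rw [Sym2.mem_iff]; rintro (rfl | rfl) <;> exact haW (by assumption))]
    exact he
  · rw [hω s(x, y) (by rw [Sym2.mem_iff]; rintro (rfl | rfl) <;> exact haW (by assumption))]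
    exact he

lemma Rset_congr {ω ω' : Sym2 (Fin n) → Bool} {a : Fin n} {W₁ A₁ : Finset (Fin n)}
    (hω : ∀ e, a ∉ e → ω e = ω' e) (haW : a ∉ W₁) : Rset ω W₁ A₁ = Rset ω' W₁ A₁ := by
  unfold Rset
  rw [Gr_congr hω haW]

lemma Nset_congr {ω ω' : Sym2 (Fin n) → Bool} {a : Fin n} {W A : Finset (Fin n)}
    (hω : ∀ e, a ∈ e → ω e = ω' e) : Nset ω W A a = Nset ω' W A a := by
  unfold Nset
  refine Finset.filter_congr fun v _ => ?_
  rw [hω s(a, v) (Sym2.mem_mk_left a v)]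

end Graph

/-! ### Main exploration bound -/

section Main

variable {n : ℕ} {p z : ℝ}

lemma main_bound (hp0 : 0 ≤ p) (hp1 : p ≤ 1) (hz : 1 ≤ z) :
    ∀ (W A : Finset (Fin n)), A ⊆ W → ∀ u : ℕ,
      Pr p (fun ω : Sym2 (Fin n) → Bool => u + 1 ≤ (Rset ω W A).card)
        ≤ z⁻¹ ^ (u + 1) * (1 - p + p * z) ^ (n * (A.card + u)) := by
  have hz0 : (0 : ℝ) < z := lt_of_lt_of_le one_pos hz
  have hzi0 : (0 : ℝ) ≤ z⁻¹ := le_of_lt (inv_pos.mpr hz0)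
  set q : ℝ := 1 - p + p * z with hqdef
  have hq1 : (1 : ℝ) ≤ q := by
    have : p * 1 ≤ p * z := mul_le_mul_of_nonneg_left hz hp0
    simp only [mul_one] at this
    linarith
  have hq0 : (0 : ℝ) ≤ q := le_trans zero_le_one hq1
  intro W
  induction W using Finset.strongInductionOn with
  | _ W ih =>
  intro A hAW u
  rcases A.eq_empty_or_nonempty with rfl | ⟨a, ha⟩
  · have h0 : Pr p (fun ω : Sym2 (Fin n) → Bool => u + 1 ≤ (Rset ω W ∅).card) = 0 := by
      unfold Pr
      refine Finset.sum_eq_zero fun ω _ => ?_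
      rw [if_neg]
      simp only [Rset_empty]
      simp
    rw [h0]
    exact mul_nonneg (pow_nonneg hzi0 _) (pow_nonneg hq0 _)
  · set W' := W.erase a with hW'
    set U := W \ A with hU
    set c := (A.erase a).card with hc
    have hAc : A.card = c + 1 := by
      rw [hc, Finset.card_erase_of_mem ha]
      have : 1 ≤ A.card := Finset.card_pos.mpr ⟨a, ha⟩
      omega
    have haW' : a ∉ W' := Finset.notMem_erase a W
    have hW'ss : W' ⊂ W := Finset.erase_ssubset (hAW ha)
    set C : ℝ := z⁻¹ ^ (u + 1) * q ^ (n * (c + u)) with hC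
    have hC0 : 0 ≤ C := mul_nonneg (pow_nonneg hzi0 _) (pow_nonneg hq0 _)
    have hNmem : ∀ ω : Sym2 (Fin n) → Bool, Nset ω W A a ∈ U.powerset :=
      fun ω => Finset.mem_powerset.mpr (Nset_subset ω W A a)
    -- per-fiber bound
    have fiber : ∀ S ∈ U.powerset,
        Pr p (fun ω : Sym2 (Fin n) → Bool =>
            (u + 1 ≤ (Rset ω W A).card) ∧ Nset ω W A a = S)
          ≤ Pr p (fun ω : Sym2 (Fin n) → Bool => Nset ω W A a = S) * (z ^ S.card * C) := by
      intro S hSU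
      have hSU' : S ⊆ U := Finset.mem_powerset.mp hSU
      set B : Finset (Fin n) := (A.erase a) ∪ S with hB
      have hBW' : B ⊆ W' := by
        intro v hv
        rcases Finset.mem_union.mp hv with h | h
        · exact Finset.mem_erase.mpr ⟨(Finset.mem_erase.mp h).1, hAW (Finset.mem_erase.mp h).2⟩
        · have h2 := Finset.mem_sdiff.mp (hSU' h)
          exact Finset.mem_erase.mpr ⟨fun hva => h2.2 (hva ▸ ha), h2.1⟩
      have hBcard : B.card = c + S.card := by
        rw [hB, Finset.card_union_of_disjoint]
        refine Finset.disjoint_left.mpr fun v hv hvS => ?_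
        exact (Finset.mem_sdiff.mp (hSU' hvS)).2 (Finset.mem_of_mem_erase hv)
      -- step 2: pass to the overcounted event
      have mono1 : Pr p (fun ω : Sym2 (Fin n) → Bool =>
            (u + 1 ≤ (Rset ω W A).card) ∧ Nset ω W A a = S)
          ≤ Pr p (fun ω : Sym2 (Fin n) → Bool =>
            Nset ω W A a = S ∧ u + 1 ≤ S.card + (Rset ω W' B).card) := by
        refine Pr_mono hp0 hp1 fun ω hω => ?_
        refine ⟨hω.2, ?_⟩
        have := Rset_card_step ω W A a hAW ha
        rw [hω.2] at this
        exact le_trans hω.1 this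
      -- step 3: independence
      have indep : Pr p (fun ω : Sym2 (Fin n) → Bool =>
            Nset ω W A a = S ∧ u + 1 ≤ S.card + (Rset ω W' B).card)
          = Pr p (fun ω : Sym2 (Fin n) → Bool => Nset ω W A a = S)
            * Pr p (fun ω : Sym2 (Fin n) → Bool => u + 1 ≤ S.card + (Rset ω W' B).card) := by
        refine Pr_indep (fun e => a ∈ e) _ _ ?_ ?_
        · intro f g hfg
          rw [Nset_congr fun e he => hfg e he]
        · intro f g hfg
          rw [Rset_congr (fun e he => hfg e he) haW']
      -- step 4: bound the second factor
      have second : Pr p (fun ω : Sym2 (Fin n) → Bool =>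
            u + 1 ≤ S.card + (Rset ω W' B).card) ≤ z ^ S.card * C := by
        by_cases h1 : S.card ≤ u
        · have hiff : ∀ ω : Sym2 (Fin n) → Bool,
              (u + 1 ≤ S.card + (Rset ω W' B).card) ↔ ((u - S.card) + 1 ≤ (Rset ω W' B).card) := by
            intro ω; omega
          have hmono : Pr p (fun ω : Sym2 (Fin n) → Bool => u + 1 ≤ S.card + (Rset ω W' B).card)
              ≤ Pr p (fun ω : Sym2 (Fin n) → Bool => (u - S.card) + 1 ≤ (Rset ω W' B).card) :=
            Pr_mono hp0 hp1 fun ω h => (hiff ω).mp h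
          refine le_trans hmono (le_trans (ih W' hW'ss B hBW' (u - S.card)) ?_)
          rw [hBcard]
          have hexp : (c + S.card) + (u - S.card) = c + u := by omega
          rw [hexp]
          have hpow : z ^ S.card * z⁻¹ ^ (u + 1) = z⁻¹ ^ (u - S.card + 1) := by
            have h5 : u + 1 = S.card + (u - S.card + 1) := by omega
            rw [h5, pow_add, ← mul_assoc, ← mul_pow, mul_inv_cancel₀ (ne_of_gt hz0),
              one_pow, one_mul]
          rw [← hpow, hC]
          exact le_of_eq (by ring)
        · push_neg at h1
          refine le_trans (Pr_le_one hp0 hp1 _) ?_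
          have h2 : (1 : ℝ) = z ^ (u + 1) * z⁻¹ ^ (u + 1) := by
            rw [← mul_pow, mul_inv_cancel₀ (ne_of_gt hz0), one_pow]
          have h3 : z ^ (u + 1) ≤ z ^ S.card := pow_le_pow_right₀ hz h1
          have h4 : (1 : ℝ) ≤ q ^ (n * (c + u)) := one_le_pow₀ hq1
          calc (1 : ℝ) = z ^ (u + 1) * z⁻¹ ^ (u + 1) * 1 := by rw [← h2]; ring
            _ ≤ z ^ S.card * z⁻¹ ^ (u + 1) * q ^ (n * (c + u)) := by
                refine mul_le_mul (mul_le_mul_of_nonneg_right h3 (pow_nonneg hzi0 _)) h4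
                  zero_le_one ?_
                exact mul_nonneg (pow_nonneg (le_of_lt hz0) _) (pow_nonneg hzi0 _)
            _ = z ^ S.card * C := by rw [hC]; ring
      calc Pr p (fun ω : Sym2 (Fin n) → Bool =>
            (u + 1 ≤ (Rset ω W A).card) ∧ Nset ω W A a = S)
          ≤ Pr p (fun ω : Sym2 (Fin n) → Bool => Nset ω W A a = S)
            * Pr p (fun ω : Sym2 (Fin n) → Bool => u + 1 ≤ S.card + (Rset ω W' B).card) := by
            rw [← indep]; exact mono1
        _ ≤ _ := mul_le_mul_of_nonneg_left second (Pr_nonneg hp0 hp1 _)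
    -- assemble
    have hsum : Pr p (fun ω : Sym2 (Fin n) → Bool => u + 1 ≤ (Rset ω W A).card)
        ≤ (∑ S ∈ U.powerset,
            Pr p (fun ω : Sym2 (Fin n) → Bool => Nset ω W A a = S) * z ^ S.card) * C := by
      rw [Pr_fiber_sum (fun ω => Nset ω W A a) U.powerset hNmem, Finset.sum_mul]
      refine Finset.sum_le_sum fun S hS => ?_
      rw [mul_assoc]
      exact fiber S hS
    have hmgf : (∑ S ∈ U.powerset,
          Pr p (fun ω : Sym2 (Fin n) → Bool => Nset ω W A a = S) * z ^ S.card)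
        = q ^ U.card := by
      rw [Pr_fiber_weight (fun ω => Nset ω W A a) U.powerset hNmem (fun S => z ^ S.card)]
      have : ∀ ω : Sym2 (Fin n) → Bool, Nset ω W A a
          = U.filter (fun v => ω (s(a, v)) = true) := fun ω => rfl
      rw [Finset.sum_congr rfl fun ω _ => by rw [this ω]]
      refine sum_wtg_pow hp0 hp1 (le_of_lt hz0) U (fun v => s(a, v)) ?_
      intro v hv v' hv' h
      have hva : v ≠ a := fun hh => (Finset.mem_sdiff.mp hv).2 (hh ▸ ha)
      rcases Sym2.eq_iff.mp h with ⟨-, h2⟩ | ⟨h2, h3⟩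
      · exact h2
      · exact absurd h3 hva
    have hUn : U.card ≤ n := by
      have := Finset.card_le_univ U
      simpa using this
    have hqU : q ^ U.card ≤ q ^ n := pow_le_pow_right₀ hq1 hUn
    calc Pr p (fun ω : Sym2 (Fin n) → Bool => u + 1 ≤ (Rset ω W A).card)
        ≤ q ^ U.card * C := by rw [← hmgf]; exact hsum
      _ ≤ q ^ n * C := mul_le_mul_of_nonneg_right hqU hC0
      _ = z⁻¹ ^ (u + 1) * q ^ (n * (A.card + u)) := by
          rw [hC, hAc, show n * ((c + 1) + u) = n * (c + u) + n by ring, pow_add]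
          ring

end Main

/-! ### Measure-theoretic bridge -/

section Bridge

variable {n : ℕ}

instance : MeasurableSingletonClass (Sym2 (Fin n) → Bool) :=
  ⟨fun ω => by
    rw [← Set.univ_pi_singleton ω]
    exact MeasurableSet.univ_pi fun e => MeasurableSet.singleton (ω e)⟩

lemma bern_true (p : ℝ) : bern p {true} = ENNReal.ofReal p := by
  unfold bern
  rw [Measure.add_apply, Measure.smul_apply, Measure.smul_apply,
    Measure.dirac_apply, Measure.dirac_apply]
  simp

lemma bern_false (p : ℝ) : bern p {false} = ENNReal.ofReal (1 - p) := by
  unfold bern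
  rw [Measure.add_apply, Measure.smul_apply, Measure.smul_apply,
    Measure.dirac_apply, Measure.dirac_apply]
  simp

lemma bern_prob {p : ℝ} (hp0 : 0 ≤ p) (hp1 : p ≤ 1) : IsProbabilityMeasure (bern p) := by
  constructor
  unfold bern
  rw [Measure.add_apply, Measure.smul_apply, Measure.smul_apply,
    Measure.dirac_apply, Measure.dirac_apply]
  simp only [Set.mem_univ, Set.indicator_of_mem, Pi.one_apply, smul_eq_mul, mul_one]
  rw [← ENNReal.ofReal_add hp0 (by linarith)]
  norm_num

lemma erMeasure_singleton {p : ℝ} (hp0 : 0 ≤ p) (hp1 : p ≤ 1) (ω : Sym2 (Fin n) → Bool) :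
    (erMeasure n p {ω}).toReal = wtg p ω := by
  haveI := bern_prob hp0 hp1
  rw [show ({ω} : Set (Sym2 (Fin n) → Bool)) = Set.pi Set.univ (fun e => {ω e}) from
    (Set.univ_pi_singleton ω).symm]
  rw [erMeasure, Measure.pi_pi, ENNReal.toReal_prod]
  unfold wtg
  refine Finset.prod_congr rfl fun e _ => ?_
  by_cases h : ω e
  · rw [h, if_pos rfl, bern_true, ENNReal.toReal_ofReal hp0]
  · rw [Bool.not_eq_true] at h
    rw [h, if_neg (by simp), bern_false, ENNReal.toReal_ofReal (by linarith)]

lemma integral_eq_sum {p : ℝ} (hp0 : 0 ≤ p) (hp1 : p ≤ 1)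
    (g : (Sym2 (Fin n) → Bool) → ℝ) :
    ∫ ω, g ω ∂(erMeasure n p) = ∑ ω : Sym2 (Fin n) → Bool, wtg p ω * g ω := by
  haveI := bern_prob hp0 hp1
  haveI : IsProbabilityMeasure (erMeasure n p) := by
    unfold erMeasure; infer_instance
  rw [integral_fintype (Integrable.of_finite)]
  refine Finset.sum_congr rfl fun ω _ => ?_
  rw [smul_eq_mul, Measure.real, erMeasure_singleton hp0 hp1]

/-- `compSize` as `1 + |Rset|`. -/
lemma compSize_eq (ω : Sym2 (Fin n) → Bool) (v : Fin n) :
    compSize ω v = 1 + (Rset ω Finset.univ {v}).card := by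
  have hGr : Gr ω Finset.univ = graphOf ω := by
    ext x y
    simp [Gr]
  have h1 : {u | (graphOf ω).Reachable v u}
      = ↑(Finset.univ.filter (fun u => (graphOf ω).Reachable v u)) := by
    ext u; simp
  rw [compSize, h1, Set.ncard_coe_finset]
  have h2 : Finset.univ.filter (fun u => (graphOf ω).Reachable v u)
      = insert v (Rset ω Finset.univ {v}) := by
    ext u
    constructor
    · intro h
      have hreach := (Finset.mem_filter.mp h).2
      by_cases hu : u = v
      · exact Finset.mem_insert.mpr (Or.inl hu)
      · refine Finset.mem_insert.mpr (Or.inr (Finset.mem_filter.mpr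
          ⟨Finset.mem_univ u, ?_, v, Finset.mem_singleton_self v, ?_⟩))
        · rw [Finset.mem_singleton]; exact hu
        · rw [hGr]; exact hreach
    · intro h
      refine Finset.mem_filter.mpr ⟨Finset.mem_univ u, ?_⟩
      rcases Finset.mem_insert.mp h with rfl | h'
      · exact SimpleGraph.Reachable.refl u
      · obtain ⟨-, -, a, ha, hr⟩ := Finset.mem_filter.mp h'
        rw [Finset.mem_singleton] at ha
        rw [hGr] at hr
        exact ha ▸ hr
  rw [h2, Finset.card_insert_of_notMem, add_comm]
  intro hv
  have h3 := (Finset.mem_filter.mp hv).2.1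
  rw [Finset.mem_singleton] at h3
  exact h3 rfl

end Bridge

/-! ### Final assembly -/

lemma compSize_le {n : ℕ} (ω : Sym2 (Fin n) → Bool) (v : Fin n) : compSize ω v ≤ n := by
  have h1 : {u | (graphOf ω).Reachable v u}
      = ↑(Finset.univ.filter (fun u => (graphOf ω).Reachable v u)) := by
    ext u; simp
  rw [compSize, h1, Set.ncard_coe_finset]
  calc (Finset.univ.filter (fun u => (graphOf ω).Reachable v u)).card
      ≤ Finset.univ.card := Finset.card_le_univ _
    _ = n := by simp

lemma compSize_pos {n : ℕ} (ω : Sym2 (Fin n) → Bool) (v : Fin n) : 1 ≤ compSize ω v := by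
  rw [compSize_eq]; omega

/-- Subcritical regime: uniform bound on all moments of `|C(1)|`. -/
theorem stmt_12 (l : ℝ) (hl : l ∈ Set.Ioo (0 : ℝ) 1) (k : ℕ) (hk : 1 ≤ k) :
    0 < l - 1 - Real.log l ∧
    Summable (fun m : ℕ => ((m : ℝ) + 1) ^ k * Real.exp (-(m : ℝ) * (l - 1 - Real.log l))) ∧
    ∀ n : ℕ, ∀ _hn : 2 ≤ n,
      (∫ ω, (compSize ω (⟨0, by omega⟩ : Fin n) : ℝ) ^ k ∂(erMeasure n (l / n))) ≤
        ∑' m : ℕ, ((m : ℝ) + 1) ^ k * Real.exp (-(m : ℝ) * (l - 1 - Real.log l)) := by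

  obtain ⟨hl0, hl1⟩ := hl
  have hIpos : 0 < l - 1 - Real.log l := by
    have := Real.log_lt_sub_one_of_pos hl0 (ne_of_lt hl1)
    linarith
  set I := l - 1 - Real.log l with hI
  set x := Real.exp (-I) with hxdef
  have hx0 : (0 : ℝ) < x := Real.exp_pos _
  have hx1 : x < 1 := by rw [hxdef, Real.exp_lt_one_iff]; linarith
  have hxpow : ∀ m : ℕ, Real.exp (-(m : ℝ) * I) = x ^ m := by
    intro m
    rw [hxdef, ← Real.exp_nat_mul]
    congr 1; ring
  have hsum : Summable (fun m : ℕ => ((m : ℝ) + 1) ^ k * Real.exp (-(m : ℝ) * I)) := by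
    have h1 : Summable (fun m : ℕ => ((m : ℝ)) ^ k * x ^ m * x⁻¹) :=
      (summable_pow_mul_geometric_of_norm_lt_one k
        (by rwa [Real.norm_eq_abs, abs_of_pos hx0])).mul_right x⁻¹
    have h2 : Summable (fun m : ℕ => (((m + 1 : ℕ)) : ℝ) ^ k * x ^ (m + 1) * x⁻¹) :=
      (summable_nat_add_iff 1).mpr h1
    refine h2.congr fun m => ?_
    rw [hxpow m]
    push_cast
    rw [pow_succ]
    field_simp
  have htermpos : ∀ m : ℕ, 0 ≤ ((m : ℝ) + 1) ^ k * Real.exp (-(m : ℝ) * I) := by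
    intro m
    exact mul_nonneg (pow_nonneg (by positivity) _) (le_of_lt (Real.exp_pos _))
  refine ⟨hIpos, hsum, ?_⟩
  intro n hn
  have hn0 : (0 : ℝ) < n := by
    have : (2 : ℝ) ≤ (n : ℝ) := by exact_mod_cast hn
    linarith
  set p := l / (n : ℝ) with hp
  have hp0 : 0 ≤ p := le_of_lt (div_pos hl0 hn0)
  have hp1 : p ≤ 1 := by
    rw [hp, div_le_one hn0]
    have : (2 : ℝ) ≤ (n : ℝ) := by exact_mod_cast hn
    linarith
  have hz : (1 : ℝ) ≤ l⁻¹ := by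
    have hinv : l * l⁻¹ = 1 := mul_inv_cancel₀ (ne_of_gt hl0)
    have hipos : (0 : ℝ) < l⁻¹ := inv_pos.mpr hl0
    nlinarith
  set v0 : Fin n := (⟨0, by omega⟩ : Fin n) with hv0
  set q : ℝ := 1 - p + p * l⁻¹ with hq
  have hq1 : (1 : ℝ) ≤ q := by
    have : p * 1 ≤ p * l⁻¹ := mul_le_mul_of_nonneg_left hz hp0
    rw [mul_one] at this
    rw [hq]; linarith
  have hq0 : (0 : ℝ) ≤ q := le_trans zero_le_one hq1
  -- key analytic bound : l * q ^ n ≤ x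
  have hqkey : l * q ^ n ≤ x := by
    have hqexp : q ≤ Real.exp (p * (l⁻¹ - 1)) := by
      have := Real.add_one_le_exp (p * (l⁻¹ - 1))
      rw [hq]; linarith
    have hqn : q ^ n ≤ Real.exp ((n : ℝ) * (p * (l⁻¹ - 1))) := by
      rw [Real.exp_nat_mul]
      exact pow_le_pow_left₀ hq0 hqexp n
    have hnp : (n : ℝ) * p = l := by
      rw [hp]; field_simp
    have harg : (n : ℝ) * (p * (l⁻¹ - 1)) = 1 - l := by
      rw [show (n : ℝ) * (p * (l⁻¹ - 1)) = ((n : ℝ) * p) * (l⁻¹ - 1) by ring, hnp]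
      field_simp
    rw [harg] at hqn
    calc l * q ^ n ≤ l * Real.exp (1 - l) :=
          mul_le_mul_of_nonneg_left hqn (le_of_lt hl0)
      _ = Real.exp (Real.log l) * Real.exp (1 - l) := by rw [Real.exp_log hl0]
      _ = Real.exp (Real.log l + (1 - l)) := by rw [← Real.exp_add]
      _ = x := by rw [hxdef]; congr 1; rw [hI]; ring
  -- tail bound
  have tail : ∀ m : ℕ,
      Pr p (fun ω : Sym2 (Fin n) → Bool => m ≤ (Rset ω Finset.univ {v0}).card) ≤ x ^ m := by
    intro m
    cases m with
    | zero =>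
      rw [pow_zero]
      exact Pr_le_one hp0 hp1 _
    | succ u =>
      have hmain := main_bound (n := n) hp0 hp1 hz Finset.univ {v0} (Finset.subset_univ _) u
      rw [Finset.card_singleton, inv_inv] at hmain
      refine le_trans hmain ?_
      have : l ^ (u + 1) * q ^ (n * (1 + u)) = (l * q ^ n) ^ (u + 1) := by
        rw [mul_pow, ← pow_mul, Nat.add_comm 1 u]
      rw [this]
      exact pow_le_pow_left₀ (mul_nonneg (le_of_lt hl0) (pow_nonneg hq0 n)) hqkey (u + 1)
  -- expand the integral
  rw [integral_eq_sum hp0 hp1]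
  -- pointwise telescoping decomposition
  have hdecomp : ∀ ω : Sym2 (Fin n) → Bool,
      ((compSize ω v0 : ℕ) : ℝ) ^ k
        = ∑ m ∈ Finset.range n,
            ((((m : ℝ) + 1)) ^ k - ((m : ℝ)) ^ k) * (if m + 1 ≤ compSize ω v0 then 1 else 0) := by
    intro ω
    set s := compSize ω v0 with hs
    have hs1 : 1 ≤ s := compSize_pos ω v0
    have hsn : s ≤ n := compSize_le ω v0
    have e1 : ∀ m ∈ Finset.range n,
        ((((m : ℝ) + 1)) ^ k - ((m : ℝ)) ^ k) * (if m + 1 ≤ s then 1 else 0)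
          = (if m ∈ Finset.range s then ((((m : ℝ) + 1)) ^ k - ((m : ℝ)) ^ k) else 0) := by
      intro m _
      by_cases h : m + 1 ≤ s
      · rw [if_pos h, if_pos (Finset.mem_range.mpr (by omega)), mul_one]
      · rw [if_neg h, if_neg (fun hc => h (by have := Finset.mem_range.mp hc; omega)), mul_zero]
    rw [Finset.sum_congr rfl e1, Finset.sum_ite_mem,
      Finset.inter_eq_right.mpr (Finset.range_subset_range.mpr hsn)]
    have e2 : ∀ m ∈ Finset.range s,
        ((((m : ℝ) + 1)) ^ k - ((m : ℝ)) ^ k)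
          = (fun i : ℕ => ((i : ℝ)) ^ k) (m + 1) - (fun i : ℕ => ((i : ℝ)) ^ k) m := by
      intro m _
      push_cast
      ring
    rw [Finset.sum_congr rfl e2, Finset.sum_range_sub (fun i : ℕ => ((i : ℝ)) ^ k) s]
    simp [zero_pow (by omega : k ≠ 0)]
  rw [Finset.sum_congr rfl fun ω _ => by rw [hdecomp ω]]
  -- swap sums
  have hswap : ∑ ω : Sym2 (Fin n) → Bool, wtg p ω *
      (∑ m ∈ Finset.range n,
        ((((m : ℝ) + 1)) ^ k - ((m : ℝ)) ^ k) * (if m + 1 ≤ compSize ω v0 then 1 else 0))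
      = ∑ m ∈ Finset.range n, ((((m : ℝ) + 1)) ^ k - ((m : ℝ)) ^ k)
          * Pr p (fun ω : Sym2 (Fin n) → Bool => m + 1 ≤ compSize ω v0) := by
    calc ∑ ω : Sym2 (Fin n) → Bool, wtg p ω *
        (∑ m ∈ Finset.range n,
          ((((m : ℝ) + 1)) ^ k - ((m : ℝ)) ^ k) * (if m + 1 ≤ compSize ω v0 then 1 else 0))
        = ∑ ω : Sym2 (Fin n) → Bool, ∑ m ∈ Finset.range n,
            ((((m : ℝ) + 1)) ^ k - ((m : ℝ)) ^ k)
              * (if m + 1 ≤ compSize ω v0 then wtg p ω else 0) := by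
          refine Finset.sum_congr rfl fun ω _ => ?_
          rw [Finset.mul_sum]
          refine Finset.sum_congr rfl fun m _ => ?_
          by_cases h : m + 1 ≤ compSize ω v0
          · rw [if_pos h, if_pos h, mul_one]; ring
          · rw [if_neg h, if_neg h]; ring
      _ = ∑ m ∈ Finset.range n, ∑ ω : Sym2 (Fin n) → Bool,
            ((((m : ℝ) + 1)) ^ k - ((m : ℝ)) ^ k)
              * (if m + 1 ≤ compSize ω v0 then wtg p ω else 0) := Finset.sum_comm
      _ = _ := by
          refine Finset.sum_congr rfl fun m _ => ?_
          rw [Pr, Finset.mul_sum]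
          refine Finset.sum_congr rfl fun ω _ => ?_
          by_cases h : m + 1 ≤ compSize ω v0
          · rw [if_pos h, if_pos h]
          · rw [if_neg h, if_neg h]
  rw [hswap]
  have hbound : ∀ m ∈ Finset.range n,
      ((((m : ℝ) + 1)) ^ k - ((m : ℝ)) ^ k)
          * Pr p (fun ω : Sym2 (Fin n) → Bool => m + 1 ≤ compSize ω v0)
        ≤ ((m : ℝ) + 1) ^ k * Real.exp (-(m : ℝ) * I) := by
    intro m _
    have hc0 : 0 ≤ (((m : ℝ) + 1)) ^ k - ((m : ℝ)) ^ k := by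
      have := pow_le_pow_left₀ (by positivity : (0 : ℝ) ≤ (m : ℝ))
        (by linarith : (m : ℝ) ≤ (m : ℝ) + 1) k
      linarith
    have hPr : Pr p (fun ω : Sym2 (Fin n) → Bool => m + 1 ≤ compSize ω v0) ≤ x ^ m := by
      refine le_trans (Pr_mono hp0 hp1 (fun ω h => ?_)) (tail m)
      rw [compSize_eq] at h
      omega
    calc ((((m : ℝ) + 1)) ^ k - ((m : ℝ)) ^ k)
          * Pr p (fun ω : Sym2 (Fin n) → Bool => m + 1 ≤ compSize ω v0)
        ≤ ((((m : ℝ) + 1)) ^ k - ((m : ℝ)) ^ k) * x ^ m :=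
          mul_le_mul_of_nonneg_left hPr hc0
      _ ≤ ((m : ℝ) + 1) ^ k * x ^ m := by
          refine mul_le_mul_of_nonneg_right ?_ (pow_nonneg (le_of_lt hx0) m)
          have : (0 : ℝ) ≤ ((m : ℝ)) ^ k := by positivity
          linarith
      _ = ((m : ℝ) + 1) ^ k * Real.exp (-(m : ℝ) * I) := by rw [hxpow m]
  calc ∑ m ∈ Finset.range n, ((((m : ℝ) + 1)) ^ k - ((m : ℝ)) ^ k)
        * Pr p (fun ω : Sym2 (Fin n) → Bool => m + 1 ≤ compSize ω v0)
      ≤ ∑ m ∈ Finset.range n, ((m : ℝ) + 1) ^ k * Real.exp (-(m : ℝ) * I) :=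
        Finset.sum_le_sum hbound
    _ ≤ ∑' m : ℕ, ((m : ℝ) + 1) ^ k * Real.exp (-(m : ℝ) * I) :=
        Summable.sum_le_tsum (Finset.range n) (fun m _ => htermpos m) hsum


end ERW
end
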